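/- For all n ≥ 0 and complex parameter r, the (q,r)-Dowling numbers satisfy the inverse relation D_{m,r,q}(n) = ∑_{j=0}^{n} (-1)^{n-j} C(n,j) D_{m,r+1,q}(j). -/

import Mathlib

/-!
The row `k ↦ W(n,k)` is obtained from the row for `n = 0` by applying `n` times a linear
operator `T_r`, and `T_{r+s} = T_r + s`. Since `s` is a scalar, the binomial theorem gives
`T_{r+s}^n = ∑ C(n,i) s^(n-i) T_r^i`, i.e. `W_{r+s}(n,k) = ∑ C(n,i) s^(n-i) W_r(i,k)`.
Summing over `k` and taking `s = -1` (with `r + 1` in place of `r`) gives the inverse relation.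
-/

open Finset

noncomputable def qint (q : ℂ) (n : ℕ) : ℂ := (q ^ n - 1) / (q - 1)

/-- (q,r)-Whitney numbers of the first kind, via the triangular recurrence
`w(n+1,k) = q^{-n} (w(n,k-1) - (m[n]_q + r) w(n,k))`, with `w(0,0)=1` and
`w(n,k)=0` for `k>n` (the `k<0` values are zero, absorbed in the `k=0` case). -/
noncomputable def qw (q m r : ℂ) : ℕ → ℕ → ℂ
  | 0, 0 => 1
  | 0, _ + 1 => 0
  | n + 1, 0 => q ^ (-(n : ℤ)) * (0 - (m * qint q n + r) * qw q m r n 0)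
  | n + 1, k + 1 => q ^ (-(n : ℤ)) * (qw q m r n k - (m * qint q n + r) * qw q m r n (k + 1))

/-- (q,r)-Whitney numbers of the second kind, via
`W(n+1,k) = q^{k-1} W(n,k-1) + (m[k]_q + r) W(n,k)`, with `W(0,0)=1`. -/
noncomputable def qW (q m r : ℂ) : ℕ → ℕ → ℂ
  | 0, 0 => 1
  | 0, _ + 1 => 0
  | n + 1, 0 => (m * qint q 0 + r) * qW q m r n 0
  | n + 1, k + 1 => q ^ k * qW q m r n k + (m * qint q (k + 1) + r) * qW q m r n (k + 1)

noncomputable def qD (q m r : ℂ) (n : ℕ) : ℂ := ∑ k ∈ Finset.range (n + 1), qW q m r n k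

noncomputable def qWhitneyStep (q m r : ℂ) : Module.End ℂ (ℕ → ℂ) :=
  LinearMap.pi fun
    | 0 => (m * qint q 0 + r) • LinearMap.proj 0
    | k + 1 => q ^ k • LinearMap.proj k + (m * qint q (k + 1) + r) • LinearMap.proj (k + 1)

lemma qWhitneyStep_add (q m r s : ℂ) :
    qWhitneyStep q m (r + s) = qWhitneyStep q m r + s • 1 := by
  ext v k
  cases k <;> simp [qWhitneyStep] <;> ring

lemma qW_succ (q m r : ℂ) (n : ℕ) : qW q m r (n + 1) = qWhitneyStep q m r (qW q m r n) := by
  funext k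
  cases k <;> rfl

lemma qW_eq_pow_apply (q m r : ℂ) (n : ℕ) :
    qW q m r n = (qWhitneyStep q m r ^ n) (qW q m 0 0) := by
  induction n with
  | zero => funext k; cases k <;> rfl
  | succ n ih => rw [qW_succ, ih, pow_succ', Module.End.mul_apply]

lemma qW_add (q m r s : ℂ) (n k : ℕ) :
    qW q m (r + s) n k = ∑ i ∈ range (n + 1), n.choose i * s ^ (n - i) * qW q m r i k := by
  have hc : Commute (qWhitneyStep q m r) (s • 1) := (Commute.one_right _).smul_right s
  rw [qW_eq_pow_apply, qWhitneyStep_add, hc.add_pow]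
  simp only [smul_pow, one_pow, Algebra.mul_smul_comm, mul_one, Algebra.smul_mul_assoc,
    LinearMap.sum_apply, LinearMap.smul_apply, Module.End.mul_apply, Module.End.natCast_apply,
    nsmul_eq_mul, Finset.sum_apply, Pi.smul_apply, smul_eq_mul, qW_eq_pow_apply q m r]
  refine sum_congr rfl fun i _ ↦ ?_
  rw [← nsmul_eq_mul, map_nsmul, Pi.smul_apply, nsmul_eq_mul]
  ring

lemma qW_eq_zero_of_lt (q m r : ℂ) {n k : ℕ} (h : n < k) : qW q m r n k = 0 := by
  induction n generalizing k with
  | zero => obtain ⟨k, rfl⟩ := Nat.exists_eq_add_one_of_ne_zero h.ne'; rfl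
  | succ n ih =>
    obtain ⟨k, rfl⟩ := Nat.exists_eq_add_one_of_ne_zero (by omega : k ≠ 0)
    simp only [qW, ih (by omega : n < k), ih (by omega : n < k + 1), mul_zero, add_zero]

lemma qD_eq_sum_range (q m r : ℂ) {n N : ℕ} (h : n ≤ N) :
    qD q m r n = ∑ k ∈ range (N + 1), qW q m r n k :=
  sum_subset (range_subset_range.mpr (by omega)) fun _ _ hk ↦
    qW_eq_zero_of_lt q m r (by simpa using hk)

lemma qD_add (q m r s : ℂ) (n : ℕ) :
    qD q m (r + s) n = ∑ i ∈ range (n + 1), n.choose i * s ^ (n - i) * qD q m r i := by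
  rw [qD]
  simp_rw [qW_add]
  rw [sum_comm]
  refine sum_congr rfl fun i hi ↦ ?_
  rw [qD_eq_sum_range q m r (Nat.lt_succ_iff.mp (mem_range.mp hi)), mul_sum]

theorem stmt14_general (q m r : ℂ) (n : ℕ) :
    qD q m r n =
      ∑ j ∈ Finset.range (n + 1), (-1) ^ (n - j) * (n.choose j : ℂ) * qD q m (r + 1) j := by
  have h := qD_add q m (r + 1) (-1) n
  rw [add_neg_cancel_right] at h
  rw [h]
  exact sum_congr rfl fun j _ ↦ by ring

theorem stmt14 (q m r : ℂ) (hq0 : q ≠ 0) (hq1 : q ≠ 1) (n : ℕ) :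
    qD q m r n =
      ∑ j ∈ Finset.range (n + 1), (-1) ^ (n - j) * (n.choose j : ℂ) * qD q m (r + 1) j :=
  stmt14_general q m r n
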